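/- Let k be algebraically closed with char k ≠ 2, 3, and let μ ∈ k with μ ≠ 1. Under the substitution xᵢ rescaling (x₀ ↦ ((μ+2)/(μ−1))·x₀ appropriately), the pair z(μ) = (V(x₀³ + x₁³ + x₂³ − 3μx₀x₁x₂), V(μx₀ + x₁ + x₂)) is PGL(3)-equivalent to the pair (V(((μ−1)/(μ+2))³x₀³ + x₁³ + x₂³ − 3x₀x₁x₂), V(x₀ + x₁ + x₂)), whenever μ ≠ −2; consequently, as μ → 1, z(μ) converges in the space of (cubic, line) pairs to (V(x₁³ + x₂³ − 3x₀x₁x₂), V(x₀ + x₁ + x₂)). -/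

import Mathlib

/-!
With ω a primitive cube root of unity, the discrete Fourier substitution
`(x₀, x₁, x₂) ↦ (s + p + q, s + ω²p + ωq, s + ωp + ω²q)` diagonalises the Hesse pencil:
applying the factorisation `a³ + b³ + c³ - 3abc = (a + b + c)(a + ω²b + ωc)(a + ωb + ω²c)`
once to `(s, p, q)` and once to the image triple turns `x₀³ + x₁³ + x₂³ - 3μx₀x₁x₂` into
`3(1 - μ)(s³ + p³ + q³) + 9(μ + 2)spq`. Taking `s = νX₀` with `ν = (μ - 1)/(μ + 2)` makes this
`3(1 - μ)(ν³X₀³ + X₁³ + X₂³ - 3X₀X₁X₂)`, while the line `μx₀ + x₁ + x₂` becomes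
`(μ - 1)(X₀ + X₁ + X₂)`. At `μ = 1` we have `ν = 0`, which gives the nodal limit.
-/

open MvPolynomial

theorem exists_sq_add_self_add_one_eq_zero (k : Type*) [Field k] [IsAlgClosed k] :
    ∃ ω : k, ω ^ 2 + ω + 1 = 0 := by
  have hdeg : (Polynomial.X ^ 2 + Polynomial.X + 1 : Polynomial k).degree = 2 := by
    simpa using Polynomial.degree_quadratic (one_ne_zero : (1 : k) ≠ 0) (b := 1) (c := 1)
  obtain ⟨ω, hω⟩ := IsAlgClosed.exists_root _ (by rw [hdeg]; decide : _ ≠ (0 : WithBot ℕ))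
  exact ⟨ω, by simpa using hω⟩

section CubeRootOfUnity

variable {R : Type*} [CommRing R] {ω : R}

theorem add_pow_three_sub_three_mul_eq_mul (hω : ω ^ 2 + ω + 1 = 0) (a b c : R) :
    a ^ 3 + b ^ 3 + c ^ 3 - 3 * (a * b * c)
      = (a + b + c) * (a + ω ^ 2 * b + ω * c) * (a + ω * b + ω ^ 2 * c) := by
  have hconj : (a + ω ^ 2 * b + ω * c) * (a + ω * b + ω ^ 2 * c)
      = a ^ 2 + b ^ 2 + c ^ 2 - a * b - a * c - b * c := by
    linear_combination (a * b + a * c + (ω - 1) * (b ^ 2 + c ^ 2) + (ω ^ 2 - ω + 1) * (b * c)) * hω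
  rw [mul_assoc (a + b + c), hconj]
  ring

theorem hesse_form_fourier_subst (hω : ω ^ 2 + ω + 1 = 0) (m s p q : R) :
    (s + p + q) ^ 3 + (s + ω ^ 2 * p + ω * q) ^ 3 + (s + ω * p + ω ^ 2 * q) ^ 3
        - 3 * m * ((s + p + q) * (s + ω ^ 2 * p + ω * q) * (s + ω * p + ω ^ 2 * q))
      = 3 * (1 - m) * (s ^ 3 + p ^ 3 + q ^ 3) + 9 * (m + 2) * (s * p * q) := by
  set u₀ := s + p + q
  set u₁ := s + ω ^ 2 * p + ω * q
  set u₂ := s + ω * p + ω ^ 2 * q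
  have hsum : u₀ + u₁ + u₂ = 3 * s := by linear_combination (p + q) * hω
  have htwist₁ : u₀ + ω ^ 2 * u₁ + ω * u₂ = 3 * q := by
    linear_combination (s + (ω ^ 2 - ω + 1) * p + 2 * (ω - 1) * q) * hω
  have htwist₂ : u₀ + ω * u₁ + ω ^ 2 * u₂ = 3 * p := by
    linear_combination (s + 2 * (ω - 1) * p + (ω ^ 2 - ω + 1) * q) * hω
  have hu := add_pow_three_sub_three_mul_eq_mul hω u₀ u₁ u₂
  rw [hsum, htwist₁, htwist₂] at hu
  linear_combination hu - 3 * (1 - m) * add_pow_three_sub_three_mul_eq_mul hω s p q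

end CubeRootOfUnity

section HesseSubstitution

variable {k : Type*} [Field k]

def hesseSubstMatrix (ω ν : k) : Matrix (Fin 3) (Fin 3) k :=
  !![ν, 1, 1; ν, ω ^ 2, ω; ν, ω, ω ^ 2]

theorem det_hesseSubstMatrix {ω : k} (hω : ω ^ 2 + ω + 1 = 0) (ν : k) :
    (hesseSubstMatrix ω ν).det = 3 * ν * (ω - ω ^ 2) := by
  rw [hesseSubstMatrix, Matrix.det_fin_three]
  simp only [Matrix.of_apply, Matrix.cons_val', Matrix.cons_val_zero, Matrix.cons_val_one,
    Matrix.cons_val_two, Matrix.head_cons, Matrix.tail_cons, Matrix.empty_val',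
    Matrix.cons_val_fin_one, Matrix.head_fin_const]
  linear_combination (ν * ω ^ 2 - ν * ω) * hω

theorem isUnit_hesseSubstMatrix (h3 : (3 : k) ≠ 0) {ω ν : k} (hω : ω ^ 2 + ω + 1 = 0)
    (hν : ν ≠ 0) : IsUnit (hesseSubstMatrix ω ν) := by
  rw [Matrix.isUnit_iff_isUnit_det, det_hesseSubstMatrix hω, isUnit_iff_ne_zero]
  refine mul_ne_zero (mul_ne_zero h3 hν) fun h => h3 ?_
  have hsq : (ω - ω ^ 2) ^ 2 = -3 := by linear_combination (ω ^ 2 - 3 * ω + 3) * hω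
  rw [h] at hsq
  linear_combination hsq

theorem linearSubst_hesseSubstMatrix (ω ν : k) :
    (fun i => ∑ j, C (hesseSubstMatrix ω ν i j) * X j : Fin 3 → MvPolynomial (Fin 3) k)
      = ![C ν * X 0 + X 1 + X 2, C ν * X 0 + C ω ^ 2 * X 1 + C ω * X 2,
          C ν * X 0 + C ω * X 1 + C ω ^ 2 * X 2] := by
  funext i
  fin_cases i <;> simp [hesseSubstMatrix, Fin.sum_univ_three]

variable {ω μ ν : k}

theorem aeval_hesseSubstMatrix_cubic (hω : ω ^ 2 + ω + 1 = 0) (hν : ν * (μ + 2) = μ - 1) :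
    aeval (fun i => ∑ j, C (hesseSubstMatrix ω ν i j) * X j)
        (X 0 ^ 3 + X 1 ^ 3 + X 2 ^ 3 - C (3 * μ) * (X 0 * X 1 * X 2) : MvPolynomial (Fin 3) k)
      = (3 * (1 - μ)) • (C (ν ^ 3) * X 0 ^ 3 + X 1 ^ 3 + X 2 ^ 3 - C 3 * (X 0 * X 1 * X 2)) := by
  have hω' : C ω ^ 2 + C ω + 1 = (0 : MvPolynomial (Fin 3) k) := by
    simpa using congrArg C hω
  have hν' : C ν * (C μ + 2) = (C μ - 1 : MvPolynomial (Fin 3) k) := by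
    simpa [map_ofNat] using congrArg C hν
  rw [linearSubst_hesseSubstMatrix, smul_eq_C_mul]
  simp only [map_add, map_sub, map_mul, map_pow, map_one, map_ofNat, aeval_X, aeval_C,
    algebraMap_eq, Matrix.cons_val_zero, Matrix.cons_val_one, Matrix.cons_val_two,
    Matrix.head_cons, Matrix.tail_cons]
  linear_combination hesse_form_fourier_subst hω' (C μ) (C ν * X 0) (X 1) (X 2)
    + 9 * (X 0 * X 1 * X 2) * hν'

theorem aeval_hesseSubstMatrix_line (hω : ω ^ 2 + ω + 1 = 0) (hν : ν * (μ + 2) = μ - 1) :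
    aeval (fun i => ∑ j, C (hesseSubstMatrix ω ν i j) * X j)
        (C μ * X 0 + X 1 + X 2 : MvPolynomial (Fin 3) k)
      = (μ - 1) • (X 0 + X 1 + X 2) := by
  have hω' : C ω ^ 2 + C ω + 1 = (0 : MvPolynomial (Fin 3) k) := by
    simpa using congrArg C hω
  have hν' : C ν * (C μ + 2) = (C μ - 1 : MvPolynomial (Fin 3) k) := by
    simpa [map_ofNat] using congrArg C hν
  rw [linearSubst_hesseSubstMatrix, smul_eq_C_mul]
  simp only [map_add, map_sub, map_mul, map_one, aeval_X, aeval_C, algebraMap_eq,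
    Matrix.cons_val_zero, Matrix.cons_val_one, Matrix.cons_val_two, Matrix.head_cons,
    Matrix.tail_cons]
  linear_combination X 0 * hν' + (X 1 + X 2) * hω'

end HesseSubstitution

theorem stmt14 {k : Type*} [Field k] [IsAlgClosed k]
    (h3 : (3 : k) ≠ 0) :
    (∀ μ : k, μ ≠ 1 → μ + 2 ≠ 0 →
      ∃ g : Matrix (Fin 3) (Fin 3) k, IsUnit g ∧ ∃ c d : k, c ≠ 0 ∧ d ≠ 0 ∧
        aeval (R := k) (fun i => ∑ j, C (g i j) * X j)
            (X 0 ^ 3 + X 1 ^ 3 + X 2 ^ 3 - C (3 * μ) * (X 0 * X 1 * X 2) :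
              MvPolynomial (Fin 3) k)
          = c • (C (((μ - 1) / (μ + 2)) ^ 3) * X 0 ^ 3 + X 1 ^ 3 + X 2 ^ 3
              - C 3 * (X 0 * X 1 * X 2) : MvPolynomial (Fin 3) k) ∧
        aeval (R := k) (fun i => ∑ j, C (g i j) * X j)
            (C μ * X 0 + X 1 + X 2 : MvPolynomial (Fin 3) k)
          = d • (X 0 + X 1 + X 2 : MvPolynomial (Fin 3) k)) ∧
    (fun ν : k => C (ν ^ 3) * X 0 ^ 3 + X 1 ^ 3 + X 2 ^ 3 - C 3 * (X 0 * X 1 * X 2) :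
        k → MvPolynomial (Fin 3) k) ((1 - 1) / (1 + 2))
      = X 1 ^ 3 + X 2 ^ 3 - C 3 * (X 0 * X 1 * X 2) := by
  refine ⟨fun μ hμ1 hμ2 => ?_, by norm_num⟩
  obtain ⟨ω, hω⟩ := exists_sq_add_self_add_one_eq_zero k
  have hμ1' : μ - 1 ≠ 0 := sub_ne_zero.mpr hμ1
  have hν : (μ - 1) / (μ + 2) * (μ + 2) = μ - 1 := div_mul_cancel₀ _ hμ2
  exact ⟨hesseSubstMatrix ω ((μ - 1) / (μ + 2)),
    isUnit_hesseSubstMatrix h3 hω (div_ne_zero hμ1' hμ2), 3 * (1 - μ), μ - 1,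
    mul_ne_zero h3 (sub_ne_zero.mpr hμ1.symm), hμ1',
    aeval_hesseSubstMatrix_cubic hω hν, aeval_hesseSubstMatrix_line hω hν⟩
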